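/- arXiv:1301.6235 — 4 statements merged into one kernel-verified Lean document; each statement's English description precedes it below -/
import Mathlib

section
/- Let n ≥ 3 and p > n/(n-2). Set θ = 1/(p-1) and define u(x) = (1+|x|²)^{-θ} on ℝⁿ. Then there exist constants 0 < c₁ ≤ c₂ such that c₁ u(x)^p ≤ -Δu(x) ≤ c₂ u(x)^p for all x ∈ ℝⁿ. In particular u is a positive solution of -Δu = c(x)u^p for a double bounded function c. -/
/-!
Along each coordinate line, `t ↦ (1 + ‖x + t eᵢ‖²) ^ s` is `(A + 2Bt + t²) ^ s`, whose second
derivative at `0` is explicit; summing gives `-Δu = 2θ · ((n-2-2θ)r² + n)/(1+r²) · u^p`, using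
`θp = θ + 1`. The middle factor is a weighted average of `n - 2 - 2θ` and `n`, and
`p > n/(n-2)` is exactly `n - 2 - 2θ > 0`.
-/

open MeasureTheory

/-- The Laplacian of `u : ℝⁿ → ℝ`, as the sum of second derivatives along the
standard coordinate directions. -/
noncomputable def laplacian {n : ℕ} (u : EuclideanSpace ℝ (Fin n) → ℝ)
    (x : EuclideanSpace ℝ (Fin n)) : ℝ :=
  ∑ i : Fin n, iteratedDeriv 2 (fun t : ℝ => u (x + t • EuclideanSpace.basisFun (Fin n) ℝ i)) 0

lemma iteratedDeriv_two_rpow_quadratic_zero (s A B : ℝ) (h : B ^ 2 < A) :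
    iteratedDeriv 2 (fun t : ℝ => (A + 2 * B * t + t ^ 2) ^ s) 0
      = 4 * s * (s - 1) * B ^ 2 * A ^ (s - 2) + 2 * s * A ^ (s - 1) := by
  set g : ℝ → ℝ := fun t => A + 2 * B * t + t ^ 2
  have hg_pos (t : ℝ) : 0 < g t := by nlinarith [sq_nonneg (B + t)]
  have hg (t : ℝ) : HasDerivAt g (2 * B + 2 * t) t :=
    ((((hasDerivAt_id t).const_mul (2 * B)).const_add A).add (hasDerivAt_pow 2 t)).congr_deriv
      (by simp)
  have hderiv : deriv (fun t => g t ^ s) = fun t => s * g t ^ (s - 1) * (2 * B + 2 * t) := by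
    funext t
    exact ((hg t).rpow_const (Or.inl (hg_pos t).ne')).deriv.trans (by ring)
  have hderiv2 : HasDerivAt (fun t => s * g t ^ (s - 1) * (2 * B + 2 * t))
      (s * ((2 * B + 2 * 0) * (s - 1) * g 0 ^ (s - 1 - 1)) * (2 * B + 2 * 0)
        + s * g 0 ^ (s - 1) * 2) 0 := by
    have hlin : HasDerivAt (fun t : ℝ => 2 * B + 2 * t) 2 0 := by
      simpa using ((hasDerivAt_id (0 : ℝ)).const_mul 2).const_add (2 * B)
    exact (((hg 0).rpow_const (Or.inl (hg_pos 0).ne')).const_mul s).mul hlin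
  have hg0 : g 0 = A := by simp [g]
  rw [iteratedDeriv_succ, iteratedDeriv_one, hderiv, hderiv2.deriv, hg0]
  ring_nf

lemma norm_add_smul_basisFun_sq {n : ℕ} (x : EuclideanSpace ℝ (Fin n)) (i : Fin n) (t : ℝ) :
    ‖x + t • EuclideanSpace.basisFun (Fin n) ℝ i‖ ^ 2 = ‖x‖ ^ 2 + 2 * x i * t + t ^ 2 := by
  rw [norm_add_sq_real, real_inner_smul_right, norm_smul, EuclideanSpace.basisFun_apply,
    EuclideanSpace.inner_single_right]
  simp only [Real.ringHom_apply, one_mul, Real.norm_eq_abs, PiLp.norm_single, norm_one, mul_one,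
    sq_abs]
  ring

lemma laplacian_rpow_one_add_norm_sq {n : ℕ} (s : ℝ) (x : EuclideanSpace ℝ (Fin n)) :
    laplacian (fun y => (1 + ‖y‖ ^ 2) ^ s) x
      = 4 * s * (s - 1) * ‖x‖ ^ 2 * (1 + ‖x‖ ^ 2) ^ (s - 2) + 2 * s * n * (1 + ‖x‖ ^ 2) ^ (s - 1) := by
  have hcoord (i : Fin n) : x i ^ 2 < 1 + ‖x‖ ^ 2 := by
    have : x i ^ 2 ≤ ‖x‖ ^ 2 := sq_le_sq.mpr (by simpa using PiLp.norm_apply_le x i)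
    linarith
  have hline (i : Fin n) : iteratedDeriv 2
      (fun t : ℝ => (1 + ‖x + t • EuclideanSpace.basisFun (Fin n) ℝ i‖ ^ 2) ^ s) 0
      = 4 * s * (s - 1) * x i ^ 2 * (1 + ‖x‖ ^ 2) ^ (s - 2) + 2 * s * (1 + ‖x‖ ^ 2) ^ (s - 1) := by
    simp only [norm_add_smul_basisFun_sq, ← add_assoc]
    exact iteratedDeriv_two_rpow_quadratic_zero s _ _ (hcoord i)
  simp only [laplacian, hline, Finset.sum_add_distrib, ← Finset.sum_mul, ← Finset.mul_sum]
  rw [← EuclideanSpace.real_norm_sq_eq, Finset.sum_const, Finset.card_univ, Fintype.card_fin,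
    nsmul_eq_mul]
  ring

lemma neg_laplacian_rpow_neg_one_add_norm_sq {n : ℕ} (θ : ℝ) (x : EuclideanSpace ℝ (Fin n)) :
    -laplacian (fun y => (1 + ‖y‖ ^ 2) ^ (-θ)) x
      = 2 * θ * (((n - 2 - 2 * θ) * ‖x‖ ^ 2 + n) / (1 + ‖x‖ ^ 2))
        * (1 + ‖x‖ ^ 2) ^ (-θ - 1) := by
  have hpos : 0 < 1 + ‖x‖ ^ 2 := by positivity
  have hsplit : (1 + ‖x‖ ^ 2) ^ (-θ - 1) = (1 + ‖x‖ ^ 2) ^ (-θ - 2) * (1 + ‖x‖ ^ 2) := by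
    rw [← Real.rpow_add_one hpos.ne']
    ring_nf
  rw [laplacian_rpow_one_add_norm_sq, hsplit]
  field_simp
  ring

lemma mul_add_div_one_add_mem_Icc {a b r : ℝ} (hr : 0 ≤ r) :
    (a * r + b) / (1 + r) ∈ Set.Icc (min a b) (max a b) := by
  have hpos : 0 < 1 + r := by linarith
  rw [Set.mem_Icc, le_div_iff₀ hpos, div_le_iff₀ hpos]
  constructor
  · nlinarith [min_le_left a b, min_le_right a b]
  · nlinarith [le_max_left a b, le_max_right a b]

lemma one_lt_of_div_sub_two_lt {n p : ℝ} (hn : 2 < n) (hp : n / (n - 2) < p) : 1 < p :=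
  lt_trans ((one_lt_div (by linarith)).mpr (by linarith)) hp

lemma two_div_sub_one_lt_sub_two {n p : ℝ} (hn : 2 < n) (hp : n / (n - 2) < p) :
    2 / (p - 1) < n - 2 := by
  have hp1 : 0 < p - 1 := sub_pos.mpr (one_lt_of_div_sub_two_lt hn hp)
  rw [div_lt_iff₀ hp1]
  rw [div_lt_iff₀ (by linarith)] at hp
  linarith

theorem stmt_1 (n : ℕ) (hn : 3 ≤ n) (p : ℝ) (hp : p > n / (n - 2))
    (θ : ℝ) (hθ : θ = 1 / (p - 1))
    (u : EuclideanSpace ℝ (Fin n) → ℝ)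
    (hu : ∀ x, u x = (1 + ‖x‖ ^ 2) ^ (-θ)) :
    ∃ c₁ c₂ : ℝ, 0 < c₁ ∧ c₁ ≤ c₂ ∧
      ∀ x, c₁ * u x ^ p ≤ -laplacian u x ∧ -laplacian u x ≤ c₂ * u x ^ p := by
  have hn2 : (2 : ℝ) < n := by exact_mod_cast hn
  have hp1 := one_lt_of_div_sub_two_lt hn2 hp
  have hθ_pos : 0 < θ := by rw [hθ]; exact one_div_pos.mpr (by linarith)
  have hθ_mul : θ * (p - 1) = 1 := by rw [hθ]; field_simp [(sub_pos.mpr hp1).ne']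
  have hk : 0 < (n : ℝ) - 2 - 2 * θ := by
    rw [hθ, mul_one_div]; linarith [two_div_sub_one_lt_sub_two hn2 hp]
  have hup (x : EuclideanSpace ℝ (Fin n)) : u x ^ p = (1 + ‖x‖ ^ 2) ^ (-θ - 1) := by
    rw [hu, ← Real.rpow_mul (by positivity)]
    congr 1
    linear_combination -hθ_mul
  obtain rfl : u = fun y => (1 + ‖y‖ ^ 2) ^ (-θ) := funext hu
  set k := (n : ℝ) - 2 - 2 * θ
  refine ⟨2 * θ * min k n, 2 * θ * max k n, by positivity, by gcongr; exact min_le_max,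
    fun x => ?_⟩
  obtain ⟨hlow, hhigh⟩ := mul_add_div_one_add_mem_Icc (a := k) (b := n) (sq_nonneg ‖x‖)
  rw [neg_laplacian_rpow_neg_one_add_norm_sq, hup]
  constructor <;> gcongr
end

section
/- Let n ≥ 1, 0 < α < n, p = n/(n-α), and suppose u : ℝⁿ → ℝ is positive measurable and satisfies u(x) ≥ (R+|x|)^{α-n} ∫_{B_R(0)} u^p(y)dy for all R > 0. Then ∫_{B_R(0)} u^p dx ≥ c (∫_{B_R(0)} u^p dy)^p for a constant c > 0 independent of R, and consequently ∫_{ℝⁿ} u^p dx < ∞. -/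
/-!
Put `I = ∫_{B_R} u^p`. On `B_R` we have `R + |x| ≤ 2R`, so the hypothesis gives
`u ≥ (2R)^{α-n} I` there; since `(α - n) p = -n`, raising to the power `p` gives
`u^p ≥ (2R)^{-n} I^p`, and integrating over `B_R`, whose volume is `R^n |B_1|`, the powers of `R`
cancel: `I ≥ 2^{-n} |B_1| I^p`. As `p > 1`, this bounds `I` independently of `R`.
-/

open MeasureTheory Metric Module

lemma le_rpow_inv_of_mul_rpow_le {c p t : ℝ} (hc : 0 < c) (hp : 1 < p) (ht : 0 ≤ t)
    (h : c * t ^ p ≤ t) : t ≤ c⁻¹ ^ (p - 1)⁻¹ := by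
  rcases ht.eq_or_lt with rfl | ht
  · positivity
  rw [Real.le_rpow_inv_iff_of_pos ht.le (by positivity) (by linarith),
    ← mul_one c⁻¹, le_inv_mul_iff₀ hc]
  have : c * t ^ (p - 1) * t ≤ 1 * t := by
    rwa [mul_assoc, ← Real.rpow_add_one ht.ne', sub_add_cancel, one_mul]
  exact le_of_mul_le_mul_right this ht

lemma rpow_mul_rpow_le_rpow {R r γ p I w : ℝ} (hR : 0 < R) (hr : 0 ≤ r) (hrR : r ≤ R)
    (hγ : γ ≤ 0) (hp : 0 ≤ p) (hI : 0 ≤ I) (hw : (R + r) ^ γ * I ≤ w) :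
    (2 * R) ^ (γ * p) * I ^ p ≤ w ^ p := by
  have h2R : (2 * R) ^ γ * I ≤ w :=
    (mul_le_mul_of_nonneg_right
      (Real.rpow_le_rpow_of_nonpos (by positivity) (by linarith) hγ) hI).trans hw
  calc (2 * R) ^ (γ * p) * I ^ p = ((2 * R) ^ γ * I) ^ p := by
        rw [Real.mul_rpow (by positivity) hI, Real.rpow_mul (by positivity)]
    _ ≤ w ^ p := Real.rpow_le_rpow (by positivity) h2R hp

section AddHaar

variable {E : Type*} [NormedAddCommGroup E] [NormedSpace ℝ E] [FiniteDimensional ℝ E]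
  [MeasurableSpace E] [BorelSpace E] (μ : Measure E) [μ.IsAddHaarMeasure]

lemma measureReal_ball_zero_of_pos {R : ℝ} (hR : 0 < R) :
    μ.real (ball (0 : E) R) = R ^ finrank ℝ E * μ.real (ball (0 : E) 1) := by
  rw [measureReal_def, Measure.addHaar_ball_of_pos μ 0 hR, ENNReal.toReal_mul,
    ENNReal.toReal_ofReal (by positivity), measureReal_def]

theorem mul_setIntegral_ball_rpow_le_of_le {γ p R : ℝ} (hp : 0 < p)
    (hγp : γ * p = -finrank ℝ E) (hR : 0 < R) {u : E → ℝ} (hu : ∀ x, 0 ≤ u x)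
    (hlow : ∀ x ∈ ball (0 : E) R, (R + ‖x‖) ^ γ * ∫ y in ball (0 : E) R, u y ^ p ∂μ ≤ u x) :
    μ.real (ball (0 : E) 1) / 2 ^ finrank ℝ E * (∫ y in ball (0 : E) R, u y ^ p ∂μ) ^ p ≤
      ∫ y in ball (0 : E) R, u y ^ p ∂μ := by
  set I := ∫ y in ball (0 : E) R, u y ^ p ∂μ with hIdef
  by_cases hint : IntegrableOn (fun y ↦ u y ^ p) (ball (0 : E) R) μ
  swap
  · rw [hIdef, integral_undef hint, Real.zero_rpow hp.ne', mul_zero]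
  have hI : 0 ≤ I := setIntegral_nonneg measurableSet_ball fun x _ ↦ Real.rpow_nonneg (hu x) p
  have hγ : γ ≤ 0 :=
    nonpos_of_mul_nonpos_left (by rw [hγp]; exact neg_nonpos.mpr (Nat.cast_nonneg _)) hp
  have hpointwise : ∀ x ∈ ball (0 : E) R, (2 * R) ^ (γ * p) * I ^ p ≤ u x ^ p := fun x hx ↦
    rpow_mul_rpow_le_rpow hR (norm_nonneg x) (mem_ball_zero_iff.mp hx).le hγ hp.le hI (hlow x hx)
  have hmass := setIntegral_ge_of_const_le_real measurableSet_ball measure_ball_lt_top.ne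
    hpointwise hint
  rw [measureReal_ball_zero_of_pos μ hR, hγp, Real.rpow_neg (by positivity),
    Real.rpow_natCast, mul_pow] at hmass
  refine le_of_eq_of_le ?_ hmass
  field_simp

end AddHaar

theorem stmt_6_general (n : ℕ) (α p : ℝ) (hα : 0 < α) (hαn : α < n)
    (hp : p = n / ((n : ℝ) - α))
    (u : EuclideanSpace ℝ (Fin n) → ℝ)
    (hpos : ∀ x, 0 < u x)
    (hlow : ∀ R > 0, ∀ x,
      (R + ‖x‖) ^ (α - n) * (∫ y in Metric.ball (0 : EuclideanSpace ℝ (Fin n)) R, u y ^ p) ≤ u x) :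
    (∃ c > 0, ∀ R > 0,
        c * (∫ y in Metric.ball (0 : EuclideanSpace ℝ (Fin n)) R, u y ^ p) ^ p ≤
          ∫ x in Metric.ball (0 : EuclideanSpace ℝ (Fin n)) R, u x ^ p) ∧
      ∃ C : ℝ, ∀ R > 0, (∫ x in Metric.ball (0 : EuclideanSpace ℝ (Fin n)) R, u x ^ p) ≤ C := by
  have hnα : 0 < (n : ℝ) - α := by linarith
  have hp1 : 1 < p := by rw [hp, lt_div_iff₀ hnα]; linarith
  have hexp : (α - n) * p = -finrank ℝ (EuclideanSpace ℝ (Fin n)) := by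
    rw [finrank_euclideanSpace_fin, hp]; field_simp; ring
  set c := volume.real (ball (0 : EuclideanSpace ℝ (Fin n)) 1) / 2 ^ n
  have hc : 0 < c := div_pos
    (ENNReal.toReal_pos (measure_ball_pos _ _ one_pos).ne' measure_ball_lt_top.ne) (by positivity)
  have hkey : ∀ R > 0, c * (∫ y in ball (0 : EuclideanSpace ℝ (Fin n)) R, u y ^ p) ^ p ≤
      ∫ y in ball (0 : EuclideanSpace ℝ (Fin n)) R, u y ^ p := fun R hR ↦ by
    simpa only [finrank_euclideanSpace_fin] using mul_setIntegral_ball_rpow_le_of_le volume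
      (by linarith) hexp hR (fun x ↦ (hpos x).le) (fun x _ ↦ hlow R hR x)
  refine ⟨⟨c, hc, hkey⟩, c⁻¹ ^ (p - 1)⁻¹, fun R hR ↦ ?_⟩
  exact le_rpow_inv_of_mul_rpow_le hc hp1
    (setIntegral_nonneg measurableSet_ball fun x _ ↦ Real.rpow_nonneg (hpos x).le p) (hkey R hR)

theorem stmt_6 (n : ℕ) (hn : 1 ≤ n) (α p : ℝ) (hα : 0 < α) (hαn : α < n)
    (hp : p = n / ((n : ℝ) - α))
    (u : EuclideanSpace ℝ (Fin n) → ℝ)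
    (hpos : ∀ x, 0 < u x) (hmeas : Measurable u)
    (hlow : ∀ R > 0, ∀ x,
      (R + ‖x‖) ^ (α - n) * (∫ y in Metric.ball (0 : EuclideanSpace ℝ (Fin n)) R, u y ^ p) ≤ u x) :
    (∃ c > 0, ∀ R > 0,
        c * (∫ y in Metric.ball (0 : EuclideanSpace ℝ (Fin n)) R, u y ^ p) ^ p ≤
          ∫ x in Metric.ball (0 : EuclideanSpace ℝ (Fin n)) R, u x ^ p) ∧
      ∃ C : ℝ, ∀ R > 0, (∫ x in Metric.ball (0 : EuclideanSpace ℝ (Fin n)) R, u x ^ p) ≤ C :=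
  stmt_6_general n α p hα hαn hp u hpos hlow
end

section
/- Let n ≥ 3 and γ ∈ (1, n) with m = γ/(γ-1), and let θ > 0. For u(x) = (1+|x|^m)^{-θ}, the γ-Laplacian satisfies -Δ_γ u = (mθ)^{γ-1}(1+r^m)^{-(θ+1)(γ-1)} · (n + (n-(θ+1)γ)r^m)/(1+r^m), where r = |x|. In particular, if (θ+1)γ < n then -Δ_γ u is comparable to u^{(θ+1)(γ-1)/θ} uniformly on ℝⁿ. -/
open MeasureTheory

/-- Divergence of a vector field on ℝⁿ. -/
noncomputable def diverg {n : ℕ} (F : EuclideanSpace ℝ (Fin n) → EuclideanSpace ℝ (Fin n))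
    (x : EuclideanSpace ℝ (Fin n)) : ℝ :=
  ∑ i : Fin n, fderiv ℝ (fun y => F y i) x (EuclideanSpace.basisFun (Fin n) ℝ i)

/-- The γ-Laplacian `Δ_γ u = div(|∇u|^{γ-2} ∇u)`. -/
noncomputable def gammaLap {n : ℕ} (γ : ℝ) (u : EuclideanSpace ℝ (Fin n) → ℝ)
    (x : EuclideanSpace ℝ (Fin n)) : ℝ :=
  diverg (fun y => ‖gradient u y‖ ^ (γ - 2) • gradient u y) x

/-!
`u` is radial with `∇u(y) = -mθ (1 + |y|^m)^{-θ-1} |y|^{m-2} y`. Because `m (γ - 1) = γ`, the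
flux `|∇u|^{γ-2} ∇u` collapses to `g(y) y` with `g(y) = -(mθ)^{γ-1} (1 + |y|^m)^{-(θ+1)(γ-1)}`,
smooth enough that `div (g(y) y) = n g + ∇g · y` holds at every point, the origin included.
The resulting factor `(n + (n - (θ+1)γ) r^m) / (1 + r^m)` lies between `n - (θ+1)γ` and `n`,
and `u^{(θ+1)(γ-1)/θ} = (1 + r^m)^{-(θ+1)(γ-1)}`.
-/

open Real InnerProductSpace

section Radial

variable {E : Type*} [NormedAddCommGroup E] [InnerProductSpace ℝ E]

theorem hasFDerivAt_one_add_norm_rpow_rpow {m : ℝ} (hm : 1 < m) (b : ℝ) (x : E) :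
    HasFDerivAt (fun y : E => (1 + ‖y‖ ^ m) ^ b)
      ((b * (1 + ‖x‖ ^ m) ^ (b - 1) * (m * ‖x‖ ^ (m - 2))) • innerSL ℝ x) x := by
  have h := ((hasFDerivAt_norm_rpow x hm).const_add 1).rpow_const (p := b)
    (Or.inl (by positivity))
  rwa [smul_smul] at h

theorem gradient_one_add_norm_rpow_rpow [CompleteSpace E] {m : ℝ} (hm : 1 < m) (b : ℝ)
    (x : E) :
    gradient (fun y : E => (1 + ‖y‖ ^ m) ^ b) x
      = (b * (1 + ‖x‖ ^ m) ^ (b - 1) * (m * ‖x‖ ^ (m - 2))) • x := by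
  refine HasGradientAt.gradient ?_
  rw [hasGradientAt_iff_hasFDerivAt, map_smul]
  exact hasFDerivAt_one_add_norm_rpow_rpow hm b x

-- The powers of `‖y‖` cancel: `(m - 1) * (γ - 2) + (m - 2) = m * (γ - 1) - γ = 0`.
theorem norm_rpow_smul_radial_field {γ m c : ℝ} (hmγ : m * (γ - 1) = γ) (hc : 0 ≤ c) (y : E) :
    ‖(c * ‖y‖ ^ (m - 2)) • y‖ ^ (γ - 2) • (c * ‖y‖ ^ (m - 2)) • y = c ^ (γ - 1) • y := by
  rcases eq_or_ne y 0 with rfl | hy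
  · simp
  have hr : 0 < ‖y‖ := norm_pos_iff.2 hy
  have hγ1 : γ - 2 + 1 ≠ 0 := by
    intro h
    rw [show γ = 1 by linarith] at hmγ
    simp at hmγ
  rw [smul_smul, norm_smul, norm_of_nonneg (by positivity), mul_assoc,
    ← rpow_add_one hr.ne', mul_rpow hc (by positivity), ← rpow_mul hr.le]
  congr 1
  calc c ^ (γ - 2) * ‖y‖ ^ ((m - 2 + 1) * (γ - 2)) * (c * ‖y‖ ^ (m - 2))
      = c ^ (γ - 2) * c * ‖y‖ ^ ((m - 2 + 1) * (γ - 2) + (m - 2)) := by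
        rw [rpow_add hr]; ring
    _ = c ^ (γ - 1) := by
        rw [← rpow_add_one' hc hγ1, show (m - 2 + 1) * (γ - 2) + (m - 2) = 0 by linarith,
          rpow_zero, mul_one]
        ring_nf

end Radial

theorem diverg_smul_self {n : ℕ} {g : EuclideanSpace ℝ (Fin n) → ℝ}
    {g' : EuclideanSpace ℝ (Fin n) →L[ℝ] ℝ} {x : EuclideanSpace ℝ (Fin n)}
    (hg : HasFDerivAt g g' x) :
    diverg (fun y => g y • y) x = n * g x + g' x := by
  have hcomp (i : Fin n) : HasFDerivAt (fun y : EuclideanSpace ℝ (Fin n) => (g y • y) i)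
      (g x • EuclideanSpace.proj i + x i • g') x :=
    hg.mul (EuclideanSpace.proj i (𝕜 := ℝ)).hasFDerivAt
  have hg'x : g' x = ∑ i, x i * g' (EuclideanSpace.basisFun (Fin n) ℝ i) := by
    conv_lhs => rw [← (EuclideanSpace.basisFun (Fin n) ℝ).sum_repr x]
    simp [map_sum]
  unfold diverg
  simp only [fun i => (hcomp i).fderiv, add_apply, smul_apply, smul_eq_mul,
    Finset.sum_add_distrib, hg'x]
  simp

section Profile

variable {E : Type*} [NormedAddCommGroup E] [InnerProductSpace ℝ E] [CompleteSpace E]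
  {γ m θ : ℝ}

theorem norm_rpow_smul_gradient_one_add_norm_rpow_neg (hm : 1 < m) (hmγ : m * (γ - 1) = γ)
    (hθ : 0 ≤ θ) :
    (fun y : E => ‖gradient (fun z : E => (1 + ‖z‖ ^ m) ^ (-θ)) y‖ ^ (γ - 2) •
        gradient (fun z : E => (1 + ‖z‖ ^ m) ^ (-θ)) y)
      = fun y => (-(m * θ) ^ (γ - 1) * (1 + ‖y‖ ^ m) ^ (-((θ + 1) * (γ - 1)))) • y := by
  funext y
  have hA : 0 < 1 + ‖y‖ ^ m := by positivity
  have hc : 0 ≤ m * θ * (1 + ‖y‖ ^ m) ^ (-θ - 1) := by positivity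
  rw [gradient_one_add_norm_rpow_rpow hm,
    show -θ * (1 + ‖y‖ ^ m) ^ (-θ - 1) * (m * ‖y‖ ^ (m - 2))
      = -(m * θ * (1 + ‖y‖ ^ m) ^ (-θ - 1) * ‖y‖ ^ (m - 2)) by ring,
    neg_smul, norm_neg, smul_neg, norm_rpow_smul_radial_field hmγ hc, ← neg_smul,
    mul_rpow (by positivity) (rpow_nonneg hA.le _), ← rpow_mul hA.le]
  ring_nf

theorem neg_gammaLap_one_add_norm_rpow_neg {n : ℕ} (hm : 1 < m) (hmγ : m * (γ - 1) = γ)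
    (hθ : 0 ≤ θ) (x : EuclideanSpace ℝ (Fin n)) :
    -gammaLap γ (fun y => (1 + ‖y‖ ^ m) ^ (-θ)) x =
      (m * θ) ^ (γ - 1) * (1 + ‖x‖ ^ m) ^ (-((θ + 1) * (γ - 1))) *
        ((n + (n - (θ + 1) * γ) * ‖x‖ ^ m) / (1 + ‖x‖ ^ m)) := by
  rw [gammaLap, norm_rpow_smul_gradient_one_add_norm_rpow_neg hm hmγ hθ,
    diverg_smul_self ((hasFDerivAt_one_add_norm_rpow_rpow hm _ x).const_mul _)]
  set β := (θ + 1) * (γ - 1)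
  have hA : 0 < 1 + ‖x‖ ^ m := by positivity
  have hβm : (θ + 1) * γ = β * m := by rw [← hmγ]; ring
  have hr : ‖x‖ ^ (m - 2) * ‖x‖ ^ 2 = ‖x‖ ^ m := by
    rw [← rpow_natCast, ← rpow_add' (norm_nonneg x) (by simp; linarith)]
    norm_num
  have hAβ : (1 + ‖x‖ ^ m) ^ (-β) = (1 + ‖x‖ ^ m) ^ (-β - 1) * (1 + ‖x‖ ^ m) := by
    rw [← rpow_add_one hA.ne']; ring_nf
  simp only [smul_apply, innerSL_apply_apply, real_inner_self_eq_norm_sq, smul_eq_mul]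
  rw [hβm, hAβ]
  field_simp
  linear_combination (-((m * θ) ^ (γ - 1) * m * β)) * hr

end Profile

theorem mem_Icc_add_sub_mul_div_one_add {a k t : ℝ} (hk : 0 ≤ k) (ht : 0 ≤ t) :
    (a + (a - k) * t) / (1 + t) ∈ Set.Icc (a - k) a := by
  have h : 0 < 1 + t := by linarith
  constructor
  · rw [le_div_iff₀ h]; nlinarith
  · rw [div_le_iff₀ h]; nlinarith

theorem stmt_11_general (n : ℕ) (γ : ℝ) (hγ1 : 1 < γ)
    (m : ℝ) (hm : m = γ / (γ - 1)) (θ : ℝ) (hθ : 0 < θ)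
    (u : EuclideanSpace ℝ (Fin n) → ℝ)
    (hu : ∀ x, u x = (1 + ‖x‖ ^ m) ^ (-θ)) :
    (∀ x, -gammaLap γ u x =
        (m * θ) ^ (γ - 1) * (1 + ‖x‖ ^ m) ^ (-((θ + 1) * (γ - 1))) *
          ((n + (n - (θ + 1) * γ) * ‖x‖ ^ m) / (1 + ‖x‖ ^ m))) ∧
    ((θ + 1) * γ < n →
      ∃ c₁ c₂ : ℝ, 0 < c₁ ∧ c₁ ≤ c₂ ∧
        ∀ x, c₁ * u x ^ ((θ + 1) * (γ - 1) / θ) ≤ -gammaLap γ u x ∧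
          -gammaLap γ u x ≤ c₂ * u x ^ ((θ + 1) * (γ - 1) / θ)) := by
  obtain rfl : u = fun x => (1 + ‖x‖ ^ m) ^ (-θ) := funext hu
  have hm1 : 1 < m := by rw [hm, lt_div_iff₀ (by linarith)]; linarith
  have hmγ : m * (γ - 1) = γ := by rw [hm]; field_simp [(by linarith : γ - 1 ≠ 0)]
  have hformula := neg_gammaLap_one_add_norm_rpow_neg (n := n) hm1 hmγ hθ.le
  refine ⟨hformula, fun hK => ?_⟩
  set C := (m * θ) ^ (γ - 1)
  have hC : 0 < C := by positivity
  have hk : 0 ≤ (θ + 1) * γ := by positivity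
  refine ⟨C * (n - (θ + 1) * γ), C * n, mul_pos hC (by linarith),
    mul_le_mul_of_nonneg_left (by linarith) hC.le, fun x => ?_⟩
  have hA : 0 < 1 + ‖x‖ ^ m := by positivity
  have hu_pow : ((1 + ‖x‖ ^ m) ^ (-θ)) ^ ((θ + 1) * (γ - 1) / θ)
      = (1 + ‖x‖ ^ m) ^ (-((θ + 1) * (γ - 1))) := by
    rw [← rpow_mul hA.le]; congr 1; field_simp
  have hP : 0 ≤ C * (1 + ‖x‖ ^ m) ^ (-((θ + 1) * (γ - 1))) := by positivity
  obtain ⟨hlo, hhi⟩ := mem_Icc_add_sub_mul_div_one_add (a := n) hk (rpow_nonneg (norm_nonneg x) m)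
  rw [hformula, hu_pow]
  constructor <;> linarith [mul_le_mul_of_nonneg_left hlo hP, mul_le_mul_of_nonneg_left hhi hP]

theorem stmt_11 (n : ℕ) (hn : 3 ≤ n) (γ : ℝ) (hγ1 : 1 < γ) (hγn : γ < n)
    (m : ℝ) (hm : m = γ / (γ - 1)) (θ : ℝ) (hθ : 0 < θ)
    (u : EuclideanSpace ℝ (Fin n) → ℝ)
    (hu : ∀ x, u x = (1 + ‖x‖ ^ m) ^ (-θ)) :
    (∀ x, -gammaLap γ u x =
        (m * θ) ^ (γ - 1) * (1 + ‖x‖ ^ m) ^ (-((θ + 1) * (γ - 1))) *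
          ((n + (n - (θ + 1) * γ) * ‖x‖ ^ m) / (1 + ‖x‖ ^ m))) ∧
    ((θ + 1) * γ < n →
      ∃ c₁ c₂ : ℝ, 0 < c₁ ∧ c₁ ≤ c₂ ∧
        ∀ x, c₁ * u x ^ ((θ + 1) * (γ - 1) / θ) ≤ -gammaLap γ u x ∧
          -gammaLap γ u x ≤ c₂ * u x ^ ((θ + 1) * (γ - 1) / θ)) :=
  stmt_11_general n γ hγ1 m hm θ hθ u hu
end

section
/- Let a ≥ 4n and let (u,v) solve the ODE system u'' + ((n-1)/r)u' = -v, v'' + ((n-1)/r)v' = -u^p on [0,1] with u(0)=1, v(0)=a, u'(0)=v'(0)=0, p > 0, where u, v are C² and initially positive. If u(r) ≤ 1 on the interval where both are positive, then v(r) ≥ a/2 ≥ 2n and u(r) ≤ 1 - a r²/(4n) for r in that interval; consequently there exists R ∈ (0,1] with u(R) = 0 while u, v > 0 on [0,R). -/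
/-!
Write `Δ w = w'' + (n - 1) w' / r` for the radial Laplacian. Since
`(r ^ (n - 1) w')' = r ^ (n - 1) Δ w`, a bound `Δ w ≥ -c` with `w'(0) = 0` integrates to
`w' ≥ -c r / n` and then to `w(r) ≥ w(0) - c r² / (2n)`. While `0 < u ≤ 1` we have
`Δ v = -u ^ p ≥ -1`, so `v ≥ a - r² / (2n) ≥ a / 2` on `[0, 1]`; then `Δ u = -v ≤ -a / 2` gives
`u ≤ 1 - a r² / (4n)`, which is `≤ 0` at `r = 1`. Hence `min u v` has a first zero `R ∈ (0, 1]`,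
and it is a zero of `u` because `v ≥ a / 2` up to `R`.
-/

open Set

noncomputable def radialLaplacian (n : ℕ) (w : ℝ → ℝ) (r : ℝ) : ℝ :=
  deriv (deriv w) r + (((n : ℝ) - 1) / r) * deriv w r

section RadialLaplacian

variable {n : ℕ} {w : ℝ → ℝ} {c r : ℝ}

theorem radialLaplacian_neg (x : ℝ) :
    radialLaplacian n (fun y => -w y) x = -radialLaplacian n w x := by
  have hneg : deriv (fun y => -w y) = fun y => -deriv w y := deriv.neg'
  have hneg' : deriv (fun y => -deriv w y) = fun y => -deriv (deriv w) y := deriv.neg'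
  simp only [radialLaplacian, hneg, hneg']
  ring

theorem hasDerivAt_radialFlux (hn : 1 ≤ n) (c : ℝ) {x : ℝ} (hx : x ≠ 0)
    (hw : DifferentiableAt ℝ (deriv w) x) :
    HasDerivAt (fun y => y ^ (n - 1) * deriv w y + c / n * y ^ n)
      (x ^ (n - 1) * (radialLaplacian n w x + c)) x := by
  refine (((hasDerivAt_pow (n - 1) x).mul hw.hasDerivAt).add
    ((hasDerivAt_pow n x).const_mul (c / n))).congr_deriv ?_
  obtain ⟨m, rfl⟩ : ∃ m, n = m + 1 := ⟨n - 1, by omega⟩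
  rcases m with _ | k
  · simp [radialLaplacian]
  · simp only [radialLaplacian, Nat.succ_sub_one]
    push_cast
    field_simp
    ring

theorem neg_mul_div_le_deriv_of_neg_le_radialLaplacian (hn : 1 ≤ n)
    (hw : Differentiable ℝ (deriv w)) (hw0 : deriv w 0 = 0)
    (hc : ∀ x ∈ Ioo 0 r, -c ≤ radialLaplacian n w x) {x : ℝ} (hx : x ∈ Ioc 0 r) :
    -(c * x / n) ≤ deriv w x := by
  set flux : ℝ → ℝ := fun y => y ^ (n - 1) * deriv w y + c / n * y ^ n
  have hflux_mono : MonotoneOn flux (Icc 0 r) := by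
    refine monotoneOn_of_hasDerivWithinAt_nonneg (convex_Icc 0 r)
      (f' := fun y => y ^ (n - 1) * (radialLaplacian n w y + c)) ?_ (fun y hy => ?_)
      (fun y hy => ?_)
    · exact (((continuous_pow _).mul hw.continuous).add
        (continuous_const.mul (continuous_pow _))).continuousOn
    · rw [interior_Icc] at hy ⊢
      exact (hasDerivAt_radialFlux hn c hy.1.ne' (hw y)).hasDerivWithinAt
    · rw [interior_Icc] at hy
      exact mul_nonneg (pow_nonneg hy.1.le _) (by linarith [hc y hy])
  have hflux0 : flux 0 = 0 := by simp [flux, hw0, zero_pow (by omega : n ≠ 0)]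
  have hflux_x : 0 ≤ x ^ (n - 1) * (deriv w x + c * x / n) := by
    have hxn : x ^ n = x ^ (n - 1) * x := by rw [← pow_succ, Nat.sub_add_cancel hn]
    have := hflux_mono ⟨le_rfl, hx.1.le.trans hx.2⟩ ⟨hx.1.le, hx.2⟩ hx.1.le
    simp only [hflux0, flux, hxn] at this
    linarith [show x ^ (n - 1) * (deriv w x + c * x / n)
      = x ^ (n - 1) * deriv w x + c / n * (x ^ (n - 1) * x) by ring]
  linarith [nonneg_of_mul_nonneg_right hflux_x (pow_pos hx.1 _)]

theorem sub_le_of_neg_le_radialLaplacian (hn : 1 ≤ n) (hw : Differentiable ℝ w)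
    (hw' : Differentiable ℝ (deriv w)) (hw0 : deriv w 0 = 0) (hr : 0 ≤ r)
    (hc : ∀ x ∈ Ioo 0 r, -c ≤ radialLaplacian n w x) :
    w 0 - c * r ^ 2 / (2 * n) ≤ w r := by
  have hn0 : (n : ℝ) ≠ 0 := by positivity
  have hmono : MonotoneOn (fun y => w y + c * y ^ 2 / (2 * n)) (Icc 0 r) := by
    refine monotoneOn_of_hasDerivWithinAt_nonneg (convex_Icc 0 r)
      (f' := fun y => deriv w y + c * y / n) ?_ (fun y _ => ?_) (fun y hy => ?_)
    · exact (hw.continuous.add ((continuous_const.mul (continuous_pow 2)).div_const _)).continuousOn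
    · refine ((hw y).hasDerivAt.add
        (((hasDerivAt_pow 2 y).const_mul c).div_const _)).hasDerivWithinAt.congr_deriv ?_
      field_simp
      ring
    · rw [interior_Icc] at hy
      linarith [neg_mul_div_le_deriv_of_neg_le_radialLaplacian hn hw' hw0 hc ⟨hy.1, hy.2.le⟩]
  have := hmono ⟨le_rfl, hr⟩ ⟨hr, le_rfl⟩ hr
  simp only [ne_eq, OfNat.ofNat_ne_zero, not_false_eq_true, zero_pow, mul_zero, zero_div,
    add_zero] at this
  linarith

theorem le_sub_of_radialLaplacian_le_neg (hn : 1 ≤ n) (hw : Differentiable ℝ w)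
    (hw' : Differentiable ℝ (deriv w)) (hw0 : deriv w 0 = 0) (hr : 0 ≤ r)
    (hc : ∀ x ∈ Ioo 0 r, radialLaplacian n w x ≤ -c) :
    w r ≤ w 0 - c * r ^ 2 / (2 * n) := by
  have hneg : deriv (fun y => -w y) = fun y => -deriv w y := deriv.neg'
  have := sub_le_of_neg_le_radialLaplacian (w := fun y => -w y) (c := -c) hn hw.neg
    (hneg ▸ hw'.neg) (by simp [hneg, hw0]) hr
    (fun x hx => by rw [radialLaplacian_neg]; linarith [hc x hx])
  rw [neg_mul, neg_div, sub_neg_eq_add] at this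
  linarith

theorem sub_le_of_radialLaplacian_eq_neg_rpow {u : ℝ → ℝ} {p : ℝ} (hn : 1 ≤ n) (hp : 0 ≤ p)
    (hw : ContDiff ℝ 2 w) (hw0 : deriv w 0 = 0) (hr : 0 ≤ r)
    (hode : ∀ x ∈ Ioo 0 r, radialLaplacian n w x = -(u x ^ p))
    (hu : ∀ x ∈ Ioo 0 r, u x ∈ Icc 0 1) :
    w 0 - r ^ 2 / (2 * n) ≤ w r := by
  have := sub_le_of_neg_le_radialLaplacian (c := 1) hn (hw.differentiable two_ne_zero)
    hw.differentiable_deriv_two hw0 hr fun x hx => by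
      rw [hode x hx, neg_le_neg_iff]
      exact Real.rpow_le_one (hu x hx).1 (hu x hx).2 hp
  rwa [one_mul] at this

end RadialLaplacian

theorem exists_first_zero {f : ℝ → ℝ} {b : ℝ} (hf : ContinuousOn f (Icc 0 b)) (h0 : 0 < f 0)
    (hb : ∃ x ∈ Icc 0 b, f x ≤ 0) :
    ∃ R ∈ Ioc 0 b, f R = 0 ∧ ∀ x ∈ Ico 0 R, 0 < f x := by
  set B := Icc 0 b ∩ f ⁻¹' Iic 0
  have hBbdd : BddBelow B := ⟨0, fun x hx => hx.1.1⟩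
  have hRB : sInf B ∈ B := (hf.preimage_isClosed_of_isClosed isClosed_Icc isClosed_Iic).csInf_mem
    hb hBbdd
  have hR0 : 0 < sInf B := lt_of_le_of_ne hRB.1.1 fun h => by
    have := hRB.2
    simp only [← h, mem_preimage, mem_Iic] at this
    linarith
  have hpos : ∀ x ∈ Ico 0 (sInf B), 0 < f x := fun x hx => by
    by_contra! hfx
    exact (csInf_le hBbdd ⟨⟨hx.1, hx.2.le.trans hRB.1.2⟩, hfx⟩).not_gt hx.2
  have hR_nonneg : 0 ≤ f (sInf B) := by
    have hsub := closure_minimal (s := Ico 0 (sInf B)) (t := Icc 0 (sInf B) ∩ f ⁻¹' Ici 0)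
      (fun x hx => ⟨Ico_subset_Icc_self hx, (hpos x hx).le⟩)
      ((hf.mono (Icc_subset_Icc_right hRB.1.2)).preimage_isClosed_of_isClosed isClosed_Icc
        isClosed_Ici)
    rw [closure_Ico hR0.ne] at hsub
    exact (hsub (right_mem_Icc.2 hR0.le)).2
  exact ⟨sInf B, ⟨hR0, hRB.1.2⟩, le_antisymm hRB.2 hR_nonneg, hpos⟩

theorem exists_first_zero_of_pos_right {u v : ℝ → ℝ} {b : ℝ} (hu : ContinuousOn u (Icc 0 b))
    (hv : ContinuousOn v (Icc 0 b)) (hu0 : 0 < u 0) (hv0 : 0 < v 0)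
    (hb : ¬∀ x ∈ Icc 0 b, 0 < u x ∧ 0 < v x)
    (hv_pos : ∀ r ∈ Icc 0 b, (∀ s ∈ Ico 0 r, 0 < u s ∧ 0 < v s) → 0 < v r) :
    ∃ R ∈ Ioc 0 b, u R = 0 ∧ ∀ r ∈ Ico 0 R, 0 < u r ∧ 0 < v r := by
  simp only [← lt_min_iff, not_forall, not_lt, exists_prop] at hb
  obtain ⟨R, hR, hR0, hpos⟩ := exists_first_zero (f := fun x => min (u x) (v x)) (hu.inf hv)
    (lt_min hu0 hv0) hb
  have hpos' : ∀ x ∈ Ico 0 R, 0 < u x ∧ 0 < v x := fun x hx => lt_min_iff.1 (hpos x hx)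
  refine ⟨R, hR, ?_, hpos'⟩
  rcases min_choice (u R) (v R) with h | h <;> rw [h] at hR0
  · exact hR0
  · exact absurd hR0 (hv_pos R (Ioc_subset_Icc_self hR) hpos').ne'

theorem stmt_19 (n : ℕ) (hn : 1 ≤ n) (a p : ℝ) (hp : 0 < p) (ha : 4 * n ≤ a)
    (u v : ℝ → ℝ) (hu : ContDiff ℝ 2 u) (hv : ContDiff ℝ 2 v)
    (hu0 : u 0 = 1) (hv0 : v 0 = a) (hu'0 : deriv u 0 = 0) (hv'0 : deriv v 0 = 0)
    (hode1 : ∀ r ∈ Ioc (0 : ℝ) 1,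
      deriv (deriv u) r + (((n : ℝ) - 1) / r) * deriv u r = -v r)
    (hode2 : ∀ r ∈ Ioc (0 : ℝ) 1,
      deriv (deriv v) r + (((n : ℝ) - 1) / r) * deriv v r = -(u r ^ p))
    (hub : ∀ r ∈ Icc (0 : ℝ) 1, (∀ s ∈ Icc 0 r, 0 < u s ∧ 0 < v s) → u r ≤ 1) :
    (∀ r ∈ Icc (0 : ℝ) 1, (∀ s ∈ Icc 0 r, 0 < u s ∧ 0 < v s) →
        a / 2 ≤ v r ∧ 2 * (n : ℝ) ≤ a / 2 ∧ u r ≤ 1 - a * r ^ 2 / (4 * n)) ∧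
      ∃ R ∈ Ioc (0 : ℝ) 1, u R = 0 ∧ ∀ r ∈ Ico 0 R, 0 < u r ∧ 0 < v r := by
  have hn' : (1 : ℝ) ≤ n := by exact_mod_cast hn
  have hv_half : ∀ r ∈ Icc (0 : ℝ) 1, (∀ s ∈ Ico 0 r, 0 < u s ∧ 0 < v s) → a / 2 ≤ v r := by
    intro r hr hpos
    have hv_lower := sub_le_of_radialLaplacian_eq_neg_rpow hn hp.le hv hv'0 hr.1
      (fun x hx => hode2 x ⟨hx.1, hx.2.le.trans hr.2⟩) fun x hx =>
        ⟨(hpos x ⟨hx.1.le, hx.2⟩).1.le, hub x ⟨hx.1.le, hx.2.le.trans hr.2⟩ fun s hs =>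
          hpos s ⟨hs.1, hs.2.trans_lt hx.2⟩⟩
    have hr2 : r ^ 2 / (2 * n) ≤ 1 := div_le_one_of_le₀ (by nlinarith [hr.1, hr.2]) (by positivity)
    linarith
  have hu_upper : ∀ r ∈ Icc (0 : ℝ) 1, (∀ s ∈ Ico 0 r, 0 < u s ∧ 0 < v s) →
      u r ≤ 1 - a * r ^ 2 / (4 * n) := by
    intro r hr hpos
    have := le_sub_of_radialLaplacian_le_neg (c := a / 2) hn (hu.differentiable two_ne_zero)
      hu.differentiable_deriv_two hu'0 hr.1 fun x hx => by
        rw [radialLaplacian, hode1 x ⟨hx.1, hx.2.le.trans hr.2⟩, neg_le_neg_iff]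
        exact hv_half x ⟨hx.1.le, hx.2.le.trans hr.2⟩ fun s hs => hpos s ⟨hs.1, hs.2.trans hx.2⟩
    linarith [show a / 2 * r ^ 2 / (2 * n) = a * r ^ 2 / (4 * n) by ring]
  refine ⟨fun r hr hpos => ⟨hv_half r hr fun s hs => hpos s (Ico_subset_Icc_self hs), by linarith,
    hu_upper r hr fun s hs => hpos s (Ico_subset_Icc_self hs)⟩, ?_⟩
  refine exists_first_zero_of_pos_right hu.continuous.continuousOn hv.continuous.continuousOn
    (by linarith) (by linarith) (fun hpos => ?_) fun r hr hpos => by linarith [hv_half r hr hpos]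
  have hu1 := hu_upper 1 (right_mem_Icc.2 zero_le_one) fun s hs => hpos s (Ico_subset_Icc_self hs)
  have : 1 ≤ a * 1 ^ 2 / (4 * n) := by rw [le_div_iff₀ (by positivity)]; linarith
  linarith [(hpos 1 (right_mem_Icc.2 zero_le_one)).1]
end
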